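/- arXiv:2505.00960 — 2 statements merged into one kernel-verified Lean document; each statement's English description precedes it below -/
import Mathlib

section
/- Let $m_1,\dots,m_n$ be positive integers and $D$ an effective Cartier divisor in $X=\prod_{i=1}^n \mathbb{P}^{m_i}$ whose multidegree is a vector consisting only of $0$'s and $1$'s. Then $D$ is connected. -/
open MvPolynomial MeasureTheory Metric
open scoped LinearAlgebra.Projectivization

namespace MultiProj

variable {n : ℕ}

/-- Index type for the homogeneous coordinates on `∏ i, ℙ^(m i)`. -/
abbrev Idx (m : Fin n → ℕ) : Type := Σ i : Fin n, Fin (m i + 1)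

/-- `F` is multihomogeneous of multidegree `a`: every monomial of `F` has degree `a i` in the
block of variables belonging to the `i`-th factor. -/
def IsMultiHomog (m : Fin n → ℕ) (F : MvPolynomial (Idx m) ℂ) (a : Fin n → ℕ) : Prop :=
  ∀ p ∈ F.support, ∀ i : Fin n, (∑ j : Fin (m i + 1), p ⟨i, j⟩) = a i

/-- Dehomogenization of `F` in the standard affine chart where the `c i`-th homogeneous
coordinate of the `i`-th factor is set to `1`. -/
noncomputable def chart (m : Fin n → ℕ) (F : MvPolynomial (Idx m) ℂ)
    (c : ∀ i : Fin n, Fin (m i + 1)) : MvPolynomial (Idx m) ℂ :=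
  aeval (fun v : Idx m => if v.2 = c v.1 then 1 else X v) F

/-- The points of `X = ∏ i, ℙ^(m i)` over `ℂ`. -/
def Pt (m : Fin n → ℕ) : Type := ∀ i : Fin n, ℙ ℂ (Fin (m i + 1) → ℂ)

noncomputable instance (V : Type*) [AddCommGroup V] [Module ℂ V] [TopologicalSpace V] :
    TopologicalSpace (ℙ ℂ V) :=
  inferInstanceAs (TopologicalSpace (Quotient (projectivizationSetoid ℂ V)))

noncomputable instance (m : Fin n → ℕ) : TopologicalSpace (Pt m) :=
  inferInstanceAs (TopologicalSpace (∀ i : Fin n, ℙ ℂ (Fin (m i + 1) → ℂ)))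

/-- The zero locus in `∏ i, ℙ^(m i)` of a multihomogeneous polynomial. -/
noncomputable def zeroLocus (m : Fin n → ℕ) (F : MvPolynomial (Idx m) ℂ) : Set (Pt m) :=
  {x | eval (fun v : Idx m => (x v.1).rep v.2) F = 0}

/-- The pair `(X, ∑ j, q j • {F j = 0})` is Kawamata log terminal: in every standard affine
chart the function `∏ j |F j|^(-2 q j)` is locally integrable (the analytic characterization
of klt for effective pairs on a smooth variety). -/
def IsKltPair (m : Fin n → ℕ) {ι : Type} [Fintype ι] (F : ι → MvPolynomial (Idx m) ℂ)
    (q : ι → ℚ) : Prop :=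
  ∀ c : ∀ i : Fin n, Fin (m i + 1), ∀ x : Idx m → ℂ, ∃ ε > 0,
    IntegrableOn
      (fun y : Idx m → ℂ => ∏ j, ‖eval y (chart m (F j) c)‖ ^ (-2 * (q j : ℝ)))
      (Metric.ball x ε) volume

/-- The pair `(X, Δ)` with `⌊Δ⌋` the prime divisor indexed by `j₀` is purely log terminal:
the pair stays klt after decreasing the coefficient of the `j₀`-th component by any
sufficiently small positive rational. -/
def IsPltPair (m : Fin n → ℕ) {ι : Type} [Fintype ι] [DecidableEq ι]
    (F : ι → MvPolynomial (Idx m) ℂ) (q : ι → ℚ) (j₀ : ι) : Prop :=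
  ∃ ε₀ : ℚ, 0 < ε₀ ∧ ∀ ε : ℚ, 0 < ε → ε ≤ ε₀ →
    IsKltPair m F (Function.update q j₀ (q j₀ - ε))

/-- The hypersurface `{F = 0}` in `∏ i, ℙ^(m i)` is normal: in each standard affine chart
meeting it, its coordinate ring is a normal domain. -/
def IsNormalHypersurface (m : Fin n → ℕ) (F : MvPolynomial (Idx m) ℂ) : Prop :=
  ∀ c : ∀ i : Fin n, Fin (m i + 1), ¬ IsUnit (chart m F c) →
    IsDomain (MvPolynomial (Idx m) ℂ ⧸ Ideal.span {chart m F c}) ∧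
    IsIntegrallyClosed (MvPolynomial (Idx m) ℂ ⧸ Ideal.span {chart m F c})


/-- Analytic log canonical threshold of the hypersurface `{F = 0}` in `∏ i, ℙ^(m i)`:
the supremum of the set of positive `c` for which `|F|^(-2c)` is locally integrable in
every standard affine chart. -/
noncomputable def lct (m : Fin n → ℕ) (F : MvPolynomial (Idx m) ℂ) : ℝ :=
  sSup {c : ℝ | 0 < c ∧ ∀ cc : ∀ i : Fin n, Fin (m i + 1), ∀ x : Idx m → ℂ, ∃ ε > 0,
    IntegrableOn (fun y : Idx m → ℂ => ‖eval y (chart m F cc)‖ ^ (-2 * c))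
      (Metric.ball x ε) volume}

/-- A (rational) divisor class of multidegree `b` on `∏ i, ℙ^(m i)` is ample: some positive
multiple `N • b` is integral and the multihomogeneous forms of multidegree `N • b`
separate the points of `X`. -/
def IsAmpleClass (m : Fin n → ℕ) (b : Fin n → ℚ) : Prop :=
  ∃ (N : ℕ) (b' : Fin n → ℕ), 0 < N ∧ (∀ i, (b' i : ℚ) = N * b i) ∧
    ∀ x y : Pt m, x ≠ y → ∃ G : MvPolynomial (Idx m) ℂ, IsMultiHomog m G b' ∧
      eval (fun v : Idx m => (x v.1).rep v.2) G = 0 ∧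
      eval (fun v : Idx m => (y v.1).rep v.2) G ≠ 0

/-- The hypersurface `D = {F = 0}` has rational singularities.  For a hypersurface `D` in the
smooth variety `X` (so `D` is Gorenstein), this is equivalent to: `D` is normal and the pair
`(X, D)` is plt (by inversion of adjunction, `D` is then klt, hence canonical, hence has
rational singularities). -/
def HasRationalSingularities (m : Fin n → ℕ) (F : MvPolynomial (Idx m) ℂ) : Prop :=
  IsNormalHypersurface m F ∧ IsPltPair m (fun _ : Fin 1 => F) (fun _ => 1) 0

/-- The projection `∏ j, ℙ^(m j) → ∏_{j ≠ i} ℙ^(m j)` forgetting the `i`-th factor. -/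
def projAway (m : Fin n → ℕ) (i : Fin n) (x : Pt m) :
    ∀ j : {j : Fin n // j ≠ i}, ℙ ℂ (Fin (m j.1 + 1) → ℂ) := fun j => x j.1

/-- `Wset m F i` is the set of points `z` of `∏_{j ≠ i} ℙ^(m j)` whose whole fiber under the
projection `π i` is contained in `{F = 0}`. -/
def Wset (m : Fin n → ℕ) (F : MvPolynomial (Idx m) ℂ) (i : Fin n) :
    Set (∀ j : {j : Fin n // j ≠ i}, ℙ ℂ (Fin (m j.1 + 1) → ℂ)) :=
  {z | ∀ x : Pt m, projAway m i x = z → x ∈ zeroLocus m F}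

/-- `x` is a smooth point of the hypersurface `{F = 0}`: some partial derivative of the
multihomogeneous form `F` does not vanish at (a representative of) `x`. -/
def IsSmoothPt (m : Fin n → ℕ) (F : MvPolynomial (Idx m) ℂ) (x : Pt m) : Prop :=
  ∃ v : Idx m, eval (fun w : Idx m => (x w.1).rep w.2) (pderiv v F) ≠ 0

end MultiProj


namespace ConnAux
open MultiProj Function

variable {n : ℕ} {m : Fin n → ℕ} (F : MvPolynomial (Idx m) ℂ)

noncomputable def evP (f : ∀ i, Fin (m i + 1) → ℂ) : ℂ :=
  eval (fun v : Idx m => f v.1 v.2) F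

variable {F} {a : Fin n → ℕ} (hdeg : IsMultiHomog m F a)

include hdeg in
lemma evP_smul_all (c : Fin n → ℂ) (f : ∀ i, Fin (m i + 1) → ℂ) :
    evP F (fun i => c i • f i) = (∏ i, c i ^ a i) * evP F f := by
  rw [evP, evP, eval_eq', eval_eq', Finset.mul_sum]
  refine Finset.sum_congr rfl fun p hp => ?_
  have h1 : ∏ v : Idx m, ((fun i => c i • f i) v.1 v.2) ^ p v
      = (∏ v : Idx m, c v.1 ^ p v) * ∏ v : Idx m, (f v.1 v.2) ^ p v := by
    rw [← Finset.prod_mul_distrib]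
    refine Finset.prod_congr rfl fun v _ => ?_
    simp [Pi.smul_apply, smul_eq_mul, mul_pow]
  have h2 : ∏ v : Idx m, c v.1 ^ p v = ∏ i, c i ^ a i := by
    rw [← Finset.univ_sigma_univ, Finset.prod_sigma]
    refine Finset.prod_congr rfl fun i _ => ?_
    simp only []
    rw [show (∏ j : Fin (m i + 1), c (⟨i, j⟩ : Idx m).fst ^ p ⟨i, j⟩) = ∏ j : Fin (m i + 1), c i ^ p ⟨i, j⟩ from rfl, Finset.prod_pow_eq_pow_sum, hdeg p hp i]
  rw [h1, h2]; ring

include hdeg in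
lemma evP_update_smul (i : Fin n) (c : ℂ) (f : ∀ i, Fin (m i + 1) → ℂ)
    (s : Fin (m i + 1) → ℂ) :
    evP F (update f i (c • s)) = c ^ a i * evP F (update f i s) := by
  have h : update f i (c • s) = fun i' => (fun i'' => if i'' = i then c else 1) i' • (update f i s) i' := by
    funext i'
    by_cases h : i' = i
    · subst h; simp
    · simp [Function.update_of_ne h, h]
  rw [h, evP_smul_all hdeg (fun i'' => if i'' = i then c else 1) (update f i s)]
  congr 1
  rw [Finset.prod_eq_single i (fun b _ hb => by simp [hb]) (by simp)]
  simp

end ConnAux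

namespace ConnAux
open MultiProj Function

variable {n : ℕ} {m : Fin n → ℕ} {F : MvPolynomial (Idx m) ℂ} {a : Fin n → ℕ}
variable (hdeg : IsMultiHomog m F a)

lemma exists_eq_one (d : ℕ) (e : Fin d → ℕ) (he : ∑ j, e j = 1) :
    ∃ j0, e j0 = 1 ∧ ∀ j, j ≠ j0 → e j = 0 := by
  obtain ⟨j0, -, h⟩ := Finset.exists_ne_zero_of_sum_ne_zero (by rw [he]; exact one_ne_zero)
  have h2 : e j0 + ∑ j ∈ Finset.univ.erase j0, e j = 1 := by
    rw [Finset.add_sum_erase _ e (Finset.mem_univ j0)]; exact he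
  have h3 : e j0 = 1 ∧ ∑ j ∈ Finset.univ.erase j0, e j = 0 := by omega
  refine ⟨j0, h3.1, fun j hj => ?_⟩
  exact (Finset.sum_eq_zero_iff.1 h3.2) j (Finset.mem_erase.2 ⟨hj, Finset.mem_univ j⟩)

lemma prod_pow_linear {d : ℕ} (e : Fin d → ℕ) (he : ∑ j, e j = 1) (s s' : Fin d → ℂ) :
    (∏ j, (s j + s' j) ^ e j) = (∏ j, s j ^ e j) + ∏ j, s' j ^ e j := by
  obtain ⟨j0, hj0, hne⟩ := exists_eq_one d e he
  rw [Finset.prod_eq_single j0 (fun b _ hb => by rw [hne b hb, pow_zero]) (by simp),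
      Finset.prod_eq_single j0 (fun b _ hb => by rw [hne b hb, pow_zero]) (by simp),
      Finset.prod_eq_single j0 (fun b _ hb => by rw [hne b hb, pow_zero]) (by simp),
      hj0, pow_one, pow_one, pow_one]

include hdeg in
lemma evP_update_add (i : Fin n) (hi : a i = 1) (f : ∀ i', Fin (m i' + 1) → ℂ)
    (s s' : Fin (m i + 1) → ℂ) :
    evP F (update f i (s + s')) = evP F (update f i s) + evP F (update f i s') := by
  rw [evP, evP, evP, eval_eq', eval_eq', eval_eq', ← Finset.sum_add_distrib]
  refine Finset.sum_congr rfl fun p hp => ?_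
  rw [← mul_add]
  congr 1
  have key : ∀ w : Fin (m i + 1) → ℂ,
      (∏ v : Idx m, (update f i w) v.1 v.2 ^ p v)
      = (∏ j, w j ^ p ⟨i, j⟩) *
        ∏ i' ∈ Finset.univ.erase i, ∏ j, (f i' j ^ p ⟨i', j⟩) := by
    intro w
    rw [← Finset.univ_sigma_univ, Finset.prod_sigma, ← Finset.mul_prod_erase _ _ (Finset.mem_univ i)]
    congr 1
    · simp
    · refine Finset.prod_congr rfl fun i' hi' => ?_
      refine Finset.prod_congr rfl fun j _ => ?_
      have hupd : update f i w i' = f i' := Function.update_of_ne (Finset.mem_erase.1 hi').1 _ _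
      exact congrArg (· ^ p ⟨i', j⟩) (congrFun hupd j)
  rw [key, key, key, ← add_mul]
  congr 1
  exact prod_pow_linear _ (by rw [hdeg p hp i, hi]) s s'

include hdeg in
lemma evP_update_zero (i : Fin n) (hi : a i = 1) (f : ∀ i', Fin (m i' + 1) → ℂ) :
    evP F (update f i 0) = 0 := by
  have h := evP_update_smul hdeg i 0 f 0
  rw [smul_zero, hi, pow_one, zero_mul] at h
  exact h

include hdeg in
lemma evP_update_comb (i : Fin n) (hi : a i = 1) (f : ∀ i', Fin (m i' + 1) → ℂ)
    (c c' : ℂ) (s s' : Fin (m i + 1) → ℂ) :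
    evP F (update f i (c • s + c' • s')) = c * evP F (update f i s) + c' * evP F (update f i s') := by
  rw [evP_update_add hdeg i hi, evP_update_smul hdeg i, evP_update_smul hdeg i, hi, pow_one, pow_one]

include hdeg in
lemma evP_update_const (i : Fin n) (hi : a i = 0) (f : ∀ i', Fin (m i' + 1) → ℂ)
    (s s' : Fin (m i + 1) → ℂ) :
    evP F (update f i s) = evP F (update f i s') := by
  have h := evP_update_smul hdeg i 0 f s
  have h' := evP_update_smul hdeg i 0 f s'
  rw [zero_smul, hi, pow_zero, one_mul] at h h'
  rw [← h, h']

end ConnAux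

namespace ConnAux
open MultiProj Function

variable {n : ℕ} {m : Fin n → ℕ} {F : MvPolynomial (Idx m) ℂ} {a : Fin n → ℕ}

lemma mem_zeroLocus_of (hdeg : IsMultiHomog m F a) (g : ∀ i, Fin (m i + 1) → ℂ)
    (hg : ∀ i, g i ≠ 0) (hz : evP F g = 0) :
    (fun i => Projectivization.mk ℂ (g i) (hg i)) ∈ zeroLocus m F := by
  have hc : ∀ i, ∃ c : ℂˣ, (c : ℂ) • g i = (Projectivization.mk ℂ (g i) (hg i)).rep := by
    intro i
    obtain ⟨c, hc⟩ := Projectivization.exists_smul_eq_mk_rep ℂ (g i) (hg i)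
    exact ⟨c, hc⟩
  choose c hcc using hc
  show evP F (fun i => (Projectivization.mk ℂ (g i) (hg i)).rep) = 0
  have : (fun i => (Projectivization.mk ℂ (g i) (hg i)).rep) = fun i => (c i : ℂ) • g i := by
    funext i; rw [hcc i]
  rw [this, evP_smul_all hdeg, hz, mul_zero]

lemma seg_ne_zero {d : ℕ} {u v : Fin d → ℂ} (hu : u ≠ 0) (hv : v ≠ 0)
    (hne : Projectivization.mk ℂ u hu ≠ Projectivization.mk ℂ v hv)
    (α β : ℂ) (h : ¬(α = 0 ∧ β = 0)) : α • u + β • v ≠ 0 := by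
  intro h0
  by_cases hβ : β = 0
  · have hα : α ≠ 0 := fun hh => h ⟨hh, hβ⟩
    rw [hβ, zero_smul, add_zero, smul_eq_zero] at h0
    exact hu (h0.resolve_left hα)
  · have hv' : v = (-α / β) • u := by
      have : β • v = -(α • u) := by
        rw [eq_neg_iff_add_eq_zero, add_comm]; exact h0
      have := congrArg (fun z => β⁻¹ • z) this
      simp only [smul_smul, inv_mul_cancel₀ hβ, one_smul] at this
      rw [this, smul_neg, smul_smul]
      rw [show (-α/β : ℂ) = -(β⁻¹*α) by field_simp, neg_smul]
    have hc : (-α / β) ≠ 0 := by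
      intro hh; rw [hh, zero_smul] at hv'; exact hv hv'
    apply hne
    rw [Projectivization.mk_eq_mk_iff']
    exact ⟨(-α / β)⁻¹, by rw [hv', smul_smul, inv_mul_cancel₀ hc, one_smul]⟩

lemma joinedIn_aux (hdeg : IsMultiHomog m F a) (g : ℝ → ∀ i, Fin (m i + 1) → ℂ)
    (hc : ∀ i, Continuous fun t => g t i)
    (hne : ∀ t, ∀ i, g t i ≠ 0)
    (hz : ∀ t ∈ Set.Icc (0:ℝ) 1, evP F (g t) = 0) :
    JoinedIn (zeroLocus m F)
      (fun i => Projectivization.mk ℂ (g 0 i) (hne 0 i))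
      (fun i => Projectivization.mk ℂ (g 1 i) (hne 1 i)) := by
  have hcont : Continuous fun t : unitInterval => (fun i => Projectivization.mk ℂ (g t i) (hne t i) : Pt m) := by
    apply continuous_pi
    intro i
    exact continuous_quotient_mk'.comp
      (((hc i).comp continuous_subtype_val).subtype_mk fun t => hne (↑t) i)
  refine ⟨⟨⟨fun t => fun i => Projectivization.mk ℂ (g t i) (hne t i), hcont⟩, rfl, rfl⟩, ?_⟩
  intro t
  exact mem_zeroLocus_of hdeg _ _ (hz t ⟨t.2.1, t.2.2⟩)

end ConnAux

namespace ConnAux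
open MultiProj Function

variable {n : ℕ} {m : Fin n → ℕ} {F : MvPolynomial (Idx m) ℂ} {a : Fin n → ℕ}

lemma mk_congr {V : Type*} [AddCommGroup V] [Module ℂ V] {v w : V} (h : v = w) (hv : v ≠ 0) :
    Projectivization.mk ℂ v hv = Projectivization.mk ℂ w (h ▸ hv) := by subst h; rfl

lemma endpoint_eq (x : Pt m) (i0 j : Fin n) (hj : j ≠ i0)
    (s : Fin (m i0 + 1) → ℂ) (w : Fin (m j + 1) → ℂ)
    (h : ∀ i, (update (update (fun i' => (x i').rep) j w) i0 s) i ≠ 0)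
    (hs : s ≠ 0) (hw : w ≠ 0) :
    (fun i => Projectivization.mk ℂ ((update (update (fun i' => (x i').rep) j w) i0 s) i) (h i))
      = update (update x i0 (Projectivization.mk ℂ s hs)) j (Projectivization.mk ℂ w hw) := by
  funext i
  by_cases hij : i = j
  · subst hij
    have h1 : (update (update (fun i' => (x i').rep) i w) i0 s) i = w := by
      rw [update_of_ne hj, update_self]
    have h2 : update (update x i0 (Projectivization.mk ℂ s hs)) i (Projectivization.mk ℂ w hw) i
        = Projectivization.mk ℂ w hw := update_self _ _ _
    rw [mk_congr h1, h2]
  · by_cases hii : i = i0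
    · subst hii
      have h1 : (update (update (fun i' => (x i').rep) j w) i s) i = s := update_self _ _ _
      have h2 : update (update x i (Projectivization.mk ℂ s hs)) j (Projectivization.mk ℂ w hw) i
          = Projectivization.mk ℂ s hs := by
        rw [update_of_ne hij, update_self (f := x)]
      rw [mk_congr h1, h2]
    · have h1 : (update (update (fun i' => (x i').rep) j w) i0 s) i = (x i).rep := by
        rw [update_of_ne hii, update_of_ne hij]
      have h2 : update (update x i0 (Projectivization.mk ℂ s hs)) j (Projectivization.mk ℂ w hw) i
          = x i := by rw [update_of_ne hij, update_of_ne hii (f := x)]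
      rw [mk_congr h1, h2, Projectivization.mk_rep]

lemma exists_ker (hdeg : IsMultiHomog m F a) (i : Fin n) (hi : a i = 1) (hmi : 1 ≤ m i)
    (g : ∀ i', Fin (m i' + 1) → ℂ) :
    ∃ s : Fin (m i + 1) → ℂ, s ≠ 0 ∧ evP F (update g i s) = 0 := by
  have h2 : 1 < m i + 1 := by omega
  set k0 : Fin (m i + 1) := ⟨0, by omega⟩ with hk0
  set k1 : Fin (m i + 1) := ⟨1, h2⟩ with hk1
  have hkne : k1 ≠ k0 := by simp [hk0, hk1, Fin.ext_iff]
  set δ0 : Fin (m i + 1) → ℂ := Pi.single k0 1 with hδ0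
  set δ1 : Fin (m i + 1) → ℂ := Pi.single k1 1 with hδ1
  set A := evP F (update g i δ0) with hA
  by_cases hA0 : A = 0
  · refine ⟨δ0, ?_, hA0⟩
    intro hc
    have := congrFun hc k0
    simp [hδ0, Pi.single_eq_same] at this
  · set B := evP F (update g i δ1) with hB
    refine ⟨A • δ1 + (-B) • δ0, ?_, ?_⟩
    · intro hc
      have := congrFun hc k1
      simp [hδ0, hδ1, Pi.single_eq_same, Pi.single_eq_of_ne hkne] at this
      exact hA0 this
    · rw [evP_update_comb hdeg i hi g A (-B) δ1 δ0, ← hA, ← hB]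
      ring

end ConnAux

namespace ConnAux
open MultiProj Function

variable {n : ℕ} {m : Fin n → ℕ} {F : MvPolynomial (Idx m) ℂ} {a : Fin n → ℕ}

lemma endpoint_eq1 (x : Pt m) (i0 : Fin n) (s : Fin (m i0 + 1) → ℂ)
    (h : ∀ i, (update (fun i' => (x i').rep) i0 s) i ≠ 0) (hs : s ≠ 0) :
    (fun i => Projectivization.mk ℂ ((update (fun i' => (x i').rep) i0 s) i) (h i))
      = update x i0 (Projectivization.mk ℂ s hs) := by
  funext i
  by_cases hii : i = i0
  · subst hii
    have h1 : (update (fun i' => (x i').rep) i s) i = s := update_self _ _ _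
    have h2 : update x i (Projectivization.mk ℂ s hs) i = Projectivization.mk ℂ s hs :=
      update_self _ _ _
    rw [mk_congr h1, h2]
  · have h1 : (update (fun i' => (x i').rep) i0 s) i = (x i).rep := update_of_ne hii _ _
    have h2 : update x i0 (Projectivization.mk ℂ s hs) i = x i := update_of_ne hii _ _
    rw [mk_congr h1, h2, Projectivization.mk_rep]

lemma joined_single (hdeg : IsMultiHomog m F a) (i : Fin n)
    (σ : ℝ → Fin (m i + 1) → ℂ) (hσc : Continuous σ) (hσ : ∀ t, σ t ≠ 0) (x : Pt m)
    (hz : ∀ t ∈ Set.Icc (0:ℝ) 1, evP F (update (fun i' => (x i').rep) i (σ t)) = 0)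
    (h0 : Projectivization.mk ℂ (σ 0) (hσ 0) = x i) :
    JoinedIn (zeroLocus m F) x (update x i (Projectivization.mk ℂ (σ 1) (hσ 1))) := by
  set f := fun i' => (x i').rep with hf
  have hne : ∀ t : ℝ, ∀ i', update f i (σ t) i' ≠ 0 := by
    intro t i'
    by_cases hii : i' = i
    · subst hii; rw [update_self]; exact hσ t
    · rw [update_of_ne hii]; exact Projectivization.rep_nonzero _
  have hc : ∀ i', Continuous fun t : ℝ => update f i (σ t) i' := by
    intro i'
    by_cases hii : i' = i
    · subst hii; simp only [update_self]; exact hσc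
    · simp only [update_of_ne hii]; exact continuous_const
  have key := joinedIn_aux hdeg (fun t => update f i (σ t)) hc (fun t => hne t) hz
  rw [endpoint_eq1 x i (σ 0) (hne 0) (hσ 0), endpoint_eq1 x i (σ 1) (hne 1) (hσ 1), h0,
      update_eq_self (f := x) (a := i)] at key
  exact key

lemma joined_double (hdeg : IsMultiHomog m F a) (i0 j : Fin n) (hj : j ≠ i0)
    (σ : ℝ → Fin (m i0 + 1) → ℂ) (w : ℝ → Fin (m j + 1) → ℂ)
    (hσc : Continuous σ) (hwc : Continuous w) (hσ : ∀ t, σ t ≠ 0) (hw : ∀ t, w t ≠ 0)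
    (x : Pt m)
    (hz : ∀ t ∈ Set.Icc (0:ℝ) 1,
      evP F (update (update (fun i' => (x i').rep) j (w t)) i0 (σ t)) = 0) :
    JoinedIn (zeroLocus m F)
      (update (update x i0 (Projectivization.mk ℂ (σ 0) (hσ 0))) j (Projectivization.mk ℂ (w 0) (hw 0)))
      (update (update x i0 (Projectivization.mk ℂ (σ 1) (hσ 1))) j (Projectivization.mk ℂ (w 1) (hw 1))) := by
  set f := fun i' => (x i').rep with hf
  have hne : ∀ t : ℝ, ∀ i', update (update f j (w t)) i0 (σ t) i' ≠ 0 := by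
    intro t i'
    by_cases hii : i' = i0
    · subst hii; rw [update_self]; exact hσ t
    · rw [update_of_ne hii]
      by_cases hij : i' = j
      · subst hij; rw [update_self]; exact hw t
      · rw [update_of_ne hij]; exact Projectivization.rep_nonzero _
  have hc : ∀ i', Continuous fun t : ℝ => update (update f j (w t)) i0 (σ t) i' := by
    intro i'
    by_cases hii : i' = i0
    · subst hii; simp only [update_self]; exact hσc
    · simp only [update_of_ne hii]
      by_cases hij : i' = j
      · subst hij; simp only [update_self]; exact hwc
      · simp only [update_of_ne hij]; exact continuous_const
  have key := joinedIn_aux hdeg (fun t => update (update f j (w t)) i0 (σ t)) hc (fun t => hne t) hz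
  rw [endpoint_eq x i0 j hj (σ 0) (w 0) (hne 0) (hσ 0) (hw 0),
      endpoint_eq x i0 j hj (σ 1) (w 1) (hne 1) (hσ 1) (hw 1)] at key
  exact key

lemma not_both_zero (t : ℝ) : ¬(((1:ℂ) - (t:ℝ)) = 0 ∧ ((t:ℝ):ℂ) = 0) := by
  rintro ⟨h1, h2⟩
  rw [h2, sub_zero] at h1
  exact one_ne_zero h1

end ConnAux

namespace ConnAux
open MultiProj Function

variable {n : ℕ} {m : Fin n → ℕ} {F : MvPolynomial (Idx m) ℂ} {a : Fin n → ℕ}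

lemma seg_cont {d : ℕ} (u v : Fin d → ℂ) :
    Continuous fun t : ℝ => ((1:ℂ) - (t:ℝ)) • u + ((t:ℝ):ℂ) • v :=
  (((continuous_const.sub Complex.continuous_ofReal).smul continuous_const).add
    (Complex.continuous_ofReal.smul continuous_const))

lemma seg_zero {d : ℕ} (u v : Fin d → ℂ) :
    ((1:ℂ) - ((0:ℝ):ℂ)) • u + (((0:ℝ)):ℂ) • v = u := by push_cast; simp

lemma seg_one {d : ℕ} (u v : Fin d → ℂ) :
    ((1:ℂ) - ((1:ℝ):ℂ)) • u + (((1:ℝ)):ℂ) • v = v := by push_cast; simp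

lemma move_caseA (hdeg : IsMultiHomog m F a) (i0 : Fin n) (hi0 : a i0 = 1)
    (j : Fin n) (hj : j ≠ i0) (haj : a j ≤ 1)
    (x : Pt m) (hx : evP F (fun i' => (x i').rep) = 0)
    (v : Fin (m j + 1) → ℂ) (hv : v ≠ 0)
    (hvne : Projectivization.mk ℂ v hv ≠ x j)
    (sstar : Fin (m i0 + 1) → ℂ) (hsne : sstar ≠ 0)
    (hzu : evP F (update (fun i' => (x i').rep) i0 sstar) = 0)
    (hzv : evP F (update (update (fun i' => (x i').rep) j v) i0 sstar) = 0) :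
    JoinedIn (zeroLocus m F) x
      (update (update x i0 (Projectivization.mk ℂ sstar hsne)) j (Projectivization.mk ℂ v hv)) := by
  set f := fun i' => (x i').rep with hf
  set s₀ := f i0 with hs₀def
  have hs₀ : s₀ ≠ 0 := Projectivization.rep_nonzero _
  have hmku : Projectivization.mk ℂ (f j) (Projectivization.rep_nonzero _) = x j :=
    Projectivization.mk_rep _
  have hmkuv : Projectivization.mk ℂ (f j) (Projectivization.rep_nonzero _)
      ≠ Projectivization.mk ℂ v hv := by rw [hmku]; exact fun h => hvne h.symm
  -- part 2 : from X := update x i0 (mk sstar) to the target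
  have part2 : JoinedIn (zeroLocus m F) (update x i0 (Projectivization.mk ℂ sstar hsne))
      (update (update x i0 (Projectivization.mk ℂ sstar hsne)) j (Projectivization.mk ℂ v hv)) := by
    have hzw : ∀ t ∈ Set.Icc (0:ℝ) 1,
        evP F (update (update f j (((1:ℂ) - (t:ℝ)) • f j + ((t:ℝ):ℂ) • v)) i0 sstar) = 0 := by
      intro t _
      rw [update_comm hj]
      have hgu : evP F (update (update f i0 sstar) j (f j)) = 0 := by
        have : f j = (update f i0 sstar) j := (update_of_ne hj _ _).symm
        rw [this, update_eq_self]; exact hzu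
      have hgv : evP F (update (update f i0 sstar) j v) = 0 := by
        rw [← update_comm hj]; exact hzv
      rcases Nat.lt_or_ge (a j) 1 with h0 | h1
      · have haj0 : a j = 0 := by omega
        rw [evP_update_const hdeg j haj0 _ (((1:ℂ) - (t:ℝ)) • f j + ((t:ℝ):ℂ) • v) (f j)]
        exact hgu
      · have haj1 : a j = 1 := le_antisymm haj h1
        rw [evP_update_comb hdeg j haj1 _ _ _ (f j) v, hgu, hgv]
        ring
    have key := joined_double hdeg i0 j hj (fun _ => sstar)
      (fun t => ((1:ℂ) - (t:ℝ)) • f j + ((t:ℝ):ℂ) • v)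
      continuous_const (seg_cont _ _) (fun _ => hsne)
      (fun t => seg_ne_zero (Projectivization.rep_nonzero _) hv hmkuv _ _ (not_both_zero t))
      x hzw
    rw [mk_congr (seg_zero (f j) v), mk_congr (seg_one (f j) v)] at key
    have hXj : x j = update x i0 (Projectivization.mk ℂ sstar hsne) j :=
      (update_of_ne hj _ _).symm
    rw [hmku] at key
    beta_reduce at key
    have hstart : update (update x i0 (Projectivization.mk ℂ sstar hsne)) j (x j)
        = update x i0 (Projectivization.mk ℂ sstar hsne) := by
      rw [hXj]
      exact update_eq_self _ _
    rw [hstart] at key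
    exact key
  -- part 1 : from x to X
  by_cases hss : Projectivization.mk ℂ sstar hsne = x i0
  · rw [hss, update_eq_self (f := x) (a := i0)] at part2 ⊢
    exact part2
  · have hmkne : Projectivization.mk ℂ s₀ hs₀ ≠ Projectivization.mk ℂ sstar hsne := by
      rw [show Projectivization.mk ℂ s₀ hs₀ = x i0 from Projectivization.mk_rep _]
      exact fun h => hss h.symm
    have part1 : JoinedIn (zeroLocus m F) x (update x i0 (Projectivization.mk ℂ sstar hsne)) := by
      have hσ : ∀ t : ℝ, ((1:ℂ) - (t:ℝ)) • s₀ + ((t:ℝ):ℂ) • sstar ≠ 0 :=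
        fun t => seg_ne_zero hs₀ hsne hmkne _ _ (not_both_zero t)
      have hz : ∀ t ∈ Set.Icc (0:ℝ) 1,
          evP F (update f i0 (((1:ℂ) - (t:ℝ)) • s₀ + ((t:ℝ):ℂ) • sstar)) = 0 := by
        intro t _
        rw [evP_update_comb hdeg i0 hi0 f _ _ s₀ sstar, hs₀def, update_eq_self, hx, hzu]
        ring
      have key := joined_single hdeg i0 (fun t => ((1:ℂ) - (t:ℝ)) • s₀ + ((t:ℝ):ℂ) • sstar)
        (seg_cont _ _) hσ x hz
        (by rw [mk_congr (seg_zero s₀ sstar)]; exact Projectivization.mk_rep _)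
      rw [mk_congr (seg_one s₀ sstar)] at key
      exact key
    exact part1.trans part2

end ConnAux

namespace ConnAux
open MultiProj Function

variable {n : ℕ} {m : Fin n → ℕ} {F : MvPolynomial (Idx m) ℂ} {a : Fin n → ℕ}

lemma move (hdeg : IsMultiHomog m F a) (h01 : ∀ i, a i ≤ 1) (hm : ∀ i, 1 ≤ m i)
    (i0 : Fin n) (hi0 : a i0 = 1) (j : Fin n) (hj : j ≠ i0)
    (x : Pt m) (hx : evP F (fun i' => (x i').rep) = 0) (y : Pt m) :
    ∃ (s' : Fin (m i0 + 1) → ℂ) (hs' : s' ≠ 0),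
      JoinedIn (zeroLocus m F) x
        (update (update x i0 (Projectivization.mk ℂ s' hs')) j (y j)) := by
  classical
  set f := fun i' => (x i').rep with hf
  by_cases hxy : y j = x j
  · refine ⟨f i0, Projectivization.rep_nonzero _, ?_⟩
    rw [show Projectivization.mk ℂ (f i0) (Projectivization.rep_nonzero _) = x i0 from
        Projectivization.mk_rep _, update_eq_self (f := x) (a := i0), hxy, update_eq_self (f := x) (a := j)]
    exact JoinedIn.refl hx
  · set v := (y j).rep with hvdef
    have hv : v ≠ 0 := Projectivization.rep_nonzero _
    have hmkv : Projectivization.mk ℂ v hv = y j := Projectivization.mk_rep _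
    have hvne : Projectivization.mk ℂ v hv ≠ x j := by rw [hmkv]; exact hxy
    by_cases hex : ∃ s : Fin (m i0 + 1) → ℂ, s ≠ 0 ∧ evP F (update f i0 s) = 0 ∧
        evP F (update (update f j v) i0 s) = 0
    · obtain ⟨s, h1, h2, h3⟩ := hex
      have key := move_caseA hdeg i0 hi0 j hj (h01 j) x hx v hv hvne s h1 h2 h3
      rw [hmkv] at key
      exact ⟨s, h1, key⟩
    · push_neg at hex
      -- Case B: no common kernel vector; the block i0 must be 1-dimensional.
      have hadd1 : ∀ s s' : Fin (m i0 + 1) → ℂ,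
          evP F (update f i0 (s + s')) = evP F (update f i0 s) + evP F (update f i0 s') :=
        evP_update_add hdeg i0 hi0 f
      have hadd2 : ∀ s s' : Fin (m i0 + 1) → ℂ,
          evP F (update (update f j v) i0 (s + s'))
            = evP F (update (update f j v) i0 s) + evP F (update (update f j v) i0 s') :=
        evP_update_add hdeg i0 hi0 (update f j v)
      have hsm1 : ∀ (c : ℂ) (s : Fin (m i0 + 1) → ℂ),
          evP F (update f i0 (c • s)) = c * evP F (update f i0 s) := by
        intro c s
        rw [evP_update_smul hdeg i0 c f s, hi0, pow_one]
      have hsm2 : ∀ (c : ℂ) (s : Fin (m i0 + 1) → ℂ),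
          evP F (update (update f j v) i0 (c • s))
            = c * evP F (update (update f j v) i0 s) := by
        intro c s
        rw [evP_update_smul hdeg i0 c (update f j v) s, hi0, pow_one]
      set L : (Fin (m i0 + 1) → ℂ) →ₗ[ℂ] (Fin 2 → ℂ) :=
        { toFun := fun s => fun k : Fin 2 => if k = 0 then evP F (update f i0 s)
            else evP F (update (update f j v) i0 s),
          map_add' := by
            intro s s'
            funext k
            by_cases hk : k = 0 <;> simp [hk, hadd1, hadd2]
          map_smul' := by
            intro c s
            funext k
            by_cases hk : k = 0 <;> simp [hk, hsm1, hsm2] } with hL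
      have hinj : Function.Injective L := by
        rw [← LinearMap.ker_eq_bot]
        rw [Submodule.eq_bot_iff]
        intro s hs
        rw [LinearMap.mem_ker] at hs
        by_contra hs0
        refine hex s hs0 ?_ ?_
        · have := congrFun hs (0 : Fin 2)
          simpa [hL] using this
        · have := congrFun hs (1 : Fin 2)
          simpa [hL] using this
      have hle : m i0 + 1 ≤ 2 := by
        have h2 := LinearMap.finrank_le_finrank_of_injective hinj
        simpa [Module.finrank_fintype_fun_eq_card] using h2
      have hmi0 : m i0 = 1 := by have := hm i0; omega
      have haj1 : a j = 1 := by
        rcases Nat.lt_or_ge (a j) 1 with h0 | h1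
        · exfalso
          have haj0 : a j = 0 := by omega
          obtain ⟨s, hs, hzs⟩ := exists_ker hdeg i0 hi0 (hm i0) f
          refine hex s hs hzs ?_
          rw [update_comm hj, evP_update_const hdeg j haj0 (update f i0 s) v (update f i0 s j),
              update_eq_self]
          exact hzs
        · exact le_antisymm (h01 j) h1
      -- coordinates
      have h2lt : 1 < m i0 + 1 := by omega
      set k0 : Fin (m i0 + 1) := ⟨0, by omega⟩ with hk0
      set k1 : Fin (m i0 + 1) := ⟨1, h2lt⟩ with hk1
      have hkne : k0 ≠ k1 := by simp [hk0, hk1, Fin.ext_iff]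
      set δ0 : Fin (m i0 + 1) → ℂ := Pi.single k0 1 with hδ0
      set δ1 : Fin (m i0 + 1) → ℂ := Pi.single k1 1 with hδ1
      have hkor : ∀ k : Fin (m i0 + 1), k = k0 ∨ k = k1 := by
        intro k
        rcases k with ⟨kv, hkv⟩
        rw [hmi0] at hkv
        have : kv = 0 ∨ kv = 1 := by omega
        rcases this with h | h
        · left; exact Fin.ext (by simp [h, hk0])
        · right; exact Fin.ext (by simp [h, hk1])
      have hdec : ∀ s : Fin (m i0 + 1) → ℂ, s = s k0 • δ0 + s k1 • δ1 := by
        intro s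
        funext k
        rcases hkor k with h | h <;> subst h <;>
          simp [hδ0, hδ1, Pi.single_eq_same, Pi.single_eq_of_ne hkne,
            Pi.single_eq_of_ne (Ne.symm hkne)]
      set Au0 := evP F (update f i0 δ0) with hAu0def
      set Au1 := evP F (update f i0 δ1) with hAu1def
      set Av0 := evP F (update (update f j v) i0 δ0) with hAv0def
      set Av1 := evP F (update (update f j v) i0 δ1) with hAv1def
      have hexp_u : ∀ s : Fin (m i0 + 1) → ℂ,
          evP F (update f i0 s) = s k0 * Au0 + s k1 * Au1 := by
        intro s
        conv_lhs => rw [hdec s]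
        rw [evP_update_comb hdeg i0 hi0 f _ _ δ0 δ1]
      have hexp_v : ∀ s : Fin (m i0 + 1) → ℂ,
          evP F (update (update f j v) i0 s) = s k0 * Av0 + s k1 * Av1 := by
        intro s
        conv_lhs => rw [hdec s]
        rw [evP_update_comb hdeg i0 hi0 (update f j v) _ _ δ0 δ1]
      have hAu : ¬(Au0 = 0 ∧ Au1 = 0) := by
        rintro ⟨hh0, hh1⟩
        obtain ⟨s, hs, hzs⟩ := exists_ker hdeg i0 hi0 (hm i0) (update f j v)
        refine hex s hs ?_ hzs
        rw [hexp_u s, hh0, hh1]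
        ring
      have hcomp : ∀ (c c' : ℂ), (c • δ0 + c' • δ1) k0 = c ∧ (c • δ0 + c' • δ1) k1 = c' := by
        intro c c'
        constructor <;>
          simp [hδ0, hδ1, Pi.single_eq_same, Pi.single_eq_of_ne hkne,
            Pi.single_eq_of_ne (Ne.symm hkne)]
      have hD : Au0 * Av1 - Au1 * Av0 ≠ 0 := by
        intro hD0
        have hsne : Au1 • δ0 + (-Au0) • δ1 ≠ 0 := by
          intro hz0
          refine hAu ⟨?_, ?_⟩
          · have := congrFun hz0 k1
            rw [(hcomp Au1 (-Au0)).2] at this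
            simpa using this
          · have := congrFun hz0 k0
            rw [(hcomp Au1 (-Au0)).1] at this
            simpa using this
        refine hex (Au1 • δ0 + (-Au0) • δ1) hsne ?_ ?_
        · rw [evP_update_comb hdeg i0 hi0 f _ _ δ0 δ1, ← hAu0def, ← hAu1def]; ring
        · rw [evP_update_comb hdeg i0 hi0 (update f j v) _ _ δ0 δ1, ← hAv0def, ← hAv1def]
          linear_combination -hD0
      -- the simultaneous path
      set p1 : ℝ → ℂ := fun t => ((1:ℂ) - (t:ℝ)) * Au0 + ((t:ℝ):ℂ) * Av0 with hp1
      set p2 : ℝ → ℂ := fun t => ((1:ℂ) - (t:ℝ)) * Au1 + ((t:ℝ):ℂ) * Av1 with hp2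
      have hp : ∀ t : ℝ, ¬(p1 t = 0 ∧ p2 t = 0) := by
        rintro t ⟨h1, h2⟩
        apply hD
        rw [hp1] at h1
        rw [hp2] at h2
        linear_combination (Av1 - Au1) * h1 + (Au0 - Av0) * h2
      set σ : ℝ → Fin (m i0 + 1) → ℂ := fun t => p2 t • δ0 + (-(p1 t)) • δ1 with hσdef
      have hσne : ∀ t, σ t ≠ 0 := by
        intro t hz0
        refine hp t ⟨?_, ?_⟩
        · have := congrFun hz0 k1
          rw [hσdef] at this
          simp only [(hcomp (p2 t) (-(p1 t))).2] at this
          simpa using this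
        · have := congrFun hz0 k0
          rw [hσdef] at this
          simp only [(hcomp (p2 t) (-(p1 t))).1] at this
          exact this
      set w : ℝ → Fin (m j + 1) → ℂ := fun t => ((1:ℂ) - (t:ℝ)) • f j + ((t:ℝ):ℂ) • v with hwdef
      have hmkuv : Projectivization.mk ℂ (f j) (Projectivization.rep_nonzero _)
          ≠ Projectivization.mk ℂ v hv := by
        rw [show Projectivization.mk ℂ (f j) (Projectivization.rep_nonzero _) = x j from
          Projectivization.mk_rep _]
        exact fun h => hvne h.symm
      have hwne : ∀ t, w t ≠ 0 := fun t =>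
        seg_ne_zero (Projectivization.rep_nonzero _) hv hmkuv _ _ (not_both_zero t)
      have hσc : Continuous σ := by
        rw [hσdef, hp1, hp2]
        exact (((continuous_const.sub Complex.continuous_ofReal).mul continuous_const).add
            (Complex.continuous_ofReal.mul continuous_const)).smul continuous_const |>.add
          ((((continuous_const.sub Complex.continuous_ofReal).mul continuous_const).add
            (Complex.continuous_ofReal.mul continuous_const)).neg.smul continuous_const)
      have hwc : Continuous w := seg_cont _ _
      have hlamk : ∀ (t : ℝ) (δ : Fin (m i0 + 1) → ℂ),
          evP F (update (update f j (w t)) i0 δ)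
            = ((1:ℂ) - (t:ℝ)) * evP F (update f i0 δ) +
              ((t:ℝ):ℂ) * evP F (update (update f j v) i0 δ) := by
        intro t δ
        rw [update_comm hj, hwdef]
        rw [evP_update_comb hdeg j haj1 (update f i0 δ) _ _ (f j) v]
        congr 2
        · rw [show f j = (update f i0 δ) j from (update_of_ne hj _ _).symm, update_eq_self]
        · rw [← update_comm hj]
      have hz : ∀ t ∈ Set.Icc (0:ℝ) 1,
          evP F (update (update f j (w t)) i0 (σ t)) = 0 := by
        intro t _
        rw [hσdef]
        rw [evP_update_comb hdeg i0 hi0 (update f j (w t)) _ _ δ0 δ1]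
        rw [hlamk t δ0, hlamk t δ1, ← hAu0def, ← hAu1def, ← hAv0def, ← hAv1def, hp1, hp2]
        ring
      have key := joined_double hdeg i0 j hj σ w hσc hwc hσne hwne x hz
      -- endpoints
      have e0σ : σ 0 = Au1 • δ0 + (-Au0) • δ1 := by
        rw [hσdef, hp1, hp2]; norm_num
      have e1σ : σ 1 = Av1 • δ0 + (-Av0) • δ1 := by
        rw [hσdef, hp1, hp2]; norm_num
      have e0w : w 0 = f j := by rw [hwdef]; exact seg_zero _ _
      have e1w : w 1 = v := by rw [hwdef]; exact seg_one _ _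
      have hs1' : Av1 • δ0 + (-Av0) • δ1 ≠ 0 := e1σ ▸ hσne 1
      refine ⟨Av1 • δ0 + (-Av0) • δ1, hs1', ?_⟩
      rw [mk_congr e0σ, mk_congr e1σ, mk_congr e0w, mk_congr e1w] at key
      -- identify the starting point with x
      have hs₀ : f i0 ≠ 0 := Projectivization.rep_nonzero _
      have hσ0ne : Au1 • δ0 + (-Au0) • δ1 ≠ 0 := e0σ ▸ hσne 0
      have hlam : f i0 k0 * Au0 + f i0 k1 * Au1 = 0 := by
        rw [← hexp_u (f i0), update_eq_self]
        exact hx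
      obtain ⟨c, hc⟩ : ∃ c : ℂ, c • (Au1 • δ0 + (-Au0) • δ1) = f i0 := by
        have hgen : ∀ c : ℂ, c * Au1 = f i0 k0 → c * (-Au0) = f i0 k1 →
            c • (Au1 • δ0 + (-Au0) • δ1) = f i0 := by
          intro c h1 h2
          funext k
          rcases hkor k with h | h <;> subst h
          · rw [Pi.smul_apply, (hcomp Au1 (-Au0)).1, smul_eq_mul, h1]
          · rw [Pi.smul_apply, (hcomp Au1 (-Au0)).2, smul_eq_mul, h2]
        by_cases hA0 : Au0 = 0
        · have hA1 : Au1 ≠ 0 := fun h => hAu ⟨hA0, h⟩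
          have hf1 : f i0 k1 = 0 := by
            rw [hA0] at hlam
            simp only [mul_zero, zero_add] at hlam
            exact (mul_eq_zero.1 hlam).resolve_right hA1
          exact ⟨f i0 k0 / Au1, hgen _ (by field_simp) (by rw [hf1, hA0]; ring)⟩
        · refine ⟨-(f i0 k1) / Au0, hgen _ ?_ (by field_simp)⟩
          field_simp
          linear_combination -hlam
      have hmk0 : Projectivization.mk ℂ (Au1 • δ0 + (-Au0) • δ1) hσ0ne = x i0 := by
        have h1 : Projectivization.mk ℂ (f i0) hs₀
            = Projectivization.mk ℂ (Au1 • δ0 + (-Au0) • δ1) hσ0ne :=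
          (Projectivization.mk_eq_mk_iff' ℂ _ _ _ _).2 ⟨c, hc⟩
        rw [← h1]
        exact Projectivization.mk_rep _
      have hmkfj : Projectivization.mk ℂ (f j) (Projectivization.rep_nonzero _) = x j :=
        Projectivization.mk_rep _
      rw [hmk0, hmkfj, hmkv] at key
      have hstart : update (update x i0 (x i0)) j (x j) = x := by
        rw [update_eq_self (f := x) (a := i0), update_eq_self (f := x) (a := j)]
      rw [hstart] at key
      exact key

end ConnAux

namespace ConnAux
open MultiProj Function

variable {n : ℕ} {m : Fin n → ℕ} {F : MvPolynomial (Idx m) ℂ} {a : Fin n → ℕ}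

lemma chain (hdeg : IsMultiHomog m F a) (h01 : ∀ i, a i ≤ 1) (hm : ∀ i, 1 ≤ m i)
    (i0 : Fin n) (hi0 : a i0 = 1) (y : Pt m) (T : Finset (Fin n)) :
    i0 ∉ T → ∀ x : Pt m, evP F (fun i' => (x i').rep) = 0 →
      ∃ x' : Pt m, (evP F (fun i' => (x' i').rep) = 0) ∧ JoinedIn (zeroLocus m F) x x' ∧
        ∀ j ∈ T, x' j = y j := by
  classical
  induction T using Finset.induction_on with
  | empty => intro _ x hx; exact ⟨x, hx, JoinedIn.refl hx, by simp⟩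
  | @insert j T hjT ih =>
    intro hins x hx
    have hiT : i0 ∉ T := fun h => hins (Finset.mem_insert_of_mem h)
    have hji0 : j ≠ i0 := by
      intro h
      exact hins (h ▸ Finset.mem_insert_self j T)
    obtain ⟨x1, hx1, hjoin1, hagree⟩ := ih hiT x hx
    obtain ⟨s', hs', hjoin2⟩ := move hdeg h01 hm i0 hi0 j hji0 x1 hx1 y
    refine ⟨update (update x1 i0 (Projectivization.mk ℂ s' hs')) j (y j),
      hjoin2.target_mem, hjoin1.trans hjoin2, ?_⟩
    intro j' hj'
    rcases Finset.mem_insert.1 hj' with h | h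
    · subst h; exact update_self _ _ _
    · have hne1 : j' ≠ j := fun hh => hjT (hh ▸ h)
      have hne2 : j' ≠ i0 := fun hh => hiT (hh ▸ h)
      rw [update_of_ne hne1, update_of_ne hne2 (f := x1)]
      exact hagree j' h

lemma joined_all (hdeg : IsMultiHomog m F a) (h01 : ∀ i, a i ≤ 1) (hm : ∀ i, 1 ≤ m i)
    (i0 : Fin n) (hi0 : a i0 = 1) (x y : Pt m)
    (hx : evP F (fun i' => (x i').rep) = 0) (hy : evP F (fun i' => (y i').rep) = 0) :
    JoinedIn (zeroLocus m F) x y := by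
  classical
  obtain ⟨x', hx', hjoin1, hagree⟩ := chain hdeg h01 hm i0 hi0 y (Finset.univ.erase i0)
    (fun h => (Finset.mem_erase.1 h).1 rfl) x hx
  have hagree' : ∀ i, i ≠ i0 → x' i = y i := fun i hi =>
    hagree i (Finset.mem_erase.2 ⟨hi, Finset.mem_univ i⟩)
  set f' := fun i' => (x' i').rep with hf'
  by_cases hend : x' i0 = y i0
  · have hxy : x' = y := by
      funext i
      by_cases h : i = i0
      · subst h; exact hend
      · exact hagree' i h
    rw [← hxy]
    exact hjoin1
  · set s₀ := f' i0 with hs₀def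
    set s₁ := (y i0).rep with hs₁def
    have hs₀ : s₀ ≠ 0 := Projectivization.rep_nonzero _
    have hs₁ : s₁ ≠ 0 := Projectivization.rep_nonzero _
    have hmkne : Projectivization.mk ℂ s₀ hs₀ ≠ Projectivization.mk ℂ s₁ hs₁ := by
      rw [show Projectivization.mk ℂ s₀ hs₀ = x' i0 from Projectivization.mk_rep _,
          show Projectivization.mk ℂ s₁ hs₁ = y i0 from Projectivization.mk_rep _]
      exact hend
    have hupd : update f' i0 s₁ = fun i => (y i).rep := by
      funext i
      by_cases h : i = i0
      · subst h; rw [update_self]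
      · rw [update_of_ne h]
        show (x' i).rep = (y i).rep
        rw [hagree' i h]
    have hzs1 : evP F (update f' i0 s₁) = 0 := by rw [hupd]; exact hy
    have hσ : ∀ t : ℝ, ((1:ℂ) - (t:ℝ)) • s₀ + ((t:ℝ):ℂ) • s₁ ≠ 0 :=
      fun t => seg_ne_zero hs₀ hs₁ hmkne _ _ (not_both_zero t)
    have hz : ∀ t ∈ Set.Icc (0:ℝ) 1,
        evP F (update f' i0 (((1:ℂ) - (t:ℝ)) • s₀ + ((t:ℝ):ℂ) • s₁)) = 0 := by
      intro t _
      rw [evP_update_comb hdeg i0 hi0 f' _ _ s₀ s₁, hs₀def, update_eq_self, hx', hzs1]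
      ring
    have key := joined_single hdeg i0 (fun t => ((1:ℂ) - (t:ℝ)) • s₀ + ((t:ℝ):ℂ) • s₁)
      (seg_cont _ _) hσ x' hz
      (by rw [mk_congr (seg_zero s₀ s₁)]; exact Projectivization.mk_rep _)
    rw [mk_congr (seg_one s₀ s₁),
        show Projectivization.mk ℂ s₁ ((seg_one s₀ s₁) ▸ hσ 1) = y i0 from
          Projectivization.mk_rep _] at key
    have hupd2 : update x' i0 (y i0) = y := by
      funext i
      by_cases h : i = i0
      · subst h; rw [update_self (f := x')]
      · rw [update_of_ne h (f := x')]; exact hagree' i h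
    rw [hupd2] at key
    exact hjoin1.trans key

lemma zeroLocus_nonempty (hdeg : IsMultiHomog m F a) (hm : ∀ i, 1 ≤ m i)
    (i0 : Fin n) (hi0 : a i0 = 1) : (zeroLocus m F).Nonempty := by
  classical
  set g : ∀ i, Fin (m i + 1) → ℂ := fun i => fun _ => 1 with hg
  obtain ⟨s, hs, hz⟩ := exists_ker hdeg i0 hi0 (hm i0) g
  have hne : ∀ i, update g i0 s i ≠ 0 := by
    intro i
    by_cases h : i = i0
    · subst h; rw [update_self]; exact hs
    · rw [update_of_ne h]
      intro hc
      have := congrFun hc ⟨0, by omega⟩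
      simp [hg] at this
  exact ⟨fun i => Projectivization.mk ℂ (update g i0 s i) (hne i),
    mem_zeroLocus_of hdeg _ hne hz⟩

end ConnAux

/-- an effective Cartier divisor in `∏ i, ℙ^(m i)` whose multidegree is a
vector of `0`'s and `1`'s is connected. -/
theorem connected_of_multidegree_zero_one
    (n : ℕ) (hn : 1 ≤ n) (m : Fin n → ℕ) (hm : ∀ i, 1 ≤ m i)
    (F : MvPolynomial (MultiProj.Idx m) ℂ) (a : Fin n → ℕ)
    (hF0 : F ≠ 0) (hFu : ¬ IsUnit F)
    (hdeg : MultiProj.IsMultiHomog m F a) (h01 : ∀ i, a i ≤ 1) :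
    IsConnected (MultiProj.zeroLocus m F) := by
  classical
  obtain ⟨i0, hi0⟩ : ∃ i0, a i0 = 1 := by
    by_contra h
    push_neg at h
    have ha0 : ∀ i, a i = 0 := fun i => by have h1 := h01 i; have h2 := h i; omega
    have hsupp : ∀ p ∈ F.support, p = 0 := by
      intro p hp
      refine Finsupp.ext fun v => ?_
      rcases v with ⟨i, jj⟩
      have hsum := hdeg p hp i
      rw [ha0 i] at hsum
      have := (Finset.sum_eq_zero_iff.1 hsum) jj (Finset.mem_univ jj)
      simpa using this
    have hFC : F = MvPolynomial.C (MvPolynomial.coeff 0 F) := by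
      rcases Finset.eq_empty_or_nonempty F.support with he | hne
      · rw [MvPolynomial.support_eq_empty.1 he]; simp
      · have hsing : F.support = {0} :=
          Finset.eq_singleton_iff_nonempty_unique_mem.2 ⟨hne, fun q hq => hsupp q hq⟩
        conv_lhs => rw [F.as_sum]
        rw [hsing, Finset.sum_singleton, MvPolynomial.monomial_zero']
    have hc0 : MvPolynomial.coeff 0 F ≠ 0 := fun h0 => hF0 (by rw [hFC, h0, map_zero])
    exact hFu (hFC ▸ (isUnit_iff_ne_zero.2 hc0).map MvPolynomial.C)
  refine IsPathConnected.isConnected ?_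
  obtain ⟨x₀, hx₀⟩ := ConnAux.zeroLocus_nonempty hdeg hm i0 hi0
  refine ⟨x₀, hx₀, ?_⟩
  intro y hy
  exact ConnAux.joined_all hdeg h01 hm i0 hi0 x₀ y hx₀ hy
end

section
/- Let $X = \prod_{i=1}^n \mathbb{P}^{m_i}$ with $n \geq 2$ and all $m_i \geq 1$, let $D \subseteq X$ be an irreducible divisor of multidegree $(1,\dots,1)$, and for each $i$ let $\pi_i : X \to \prod_{j \neq i} \mathbb{P}^{m_j}$ be the projection and $W_i = \{x : \pi_i^{-1}(x) \subseteq D\}$. Then for each $i$, the restriction $\pi_i|_D$ is a $\mathbb{P}^{m_i - 1}$-bundle over the complement of $W_i$; in particular $D$ is smooth at every point not lying over any $W_i$. -/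
open MvPolynomial MeasureTheory Metric
open scoped LinearAlgebra.Projectivization

namespace MultiProjAux


variable {n : ℕ} {m : Fin n → ℕ}

/-- From a block-degree-one condition, extract the unique variable of the block occurring. -/
lemma exists_unique_index {i : Fin n} {p : (Σ i : Fin n, Fin (m i + 1)) →₀ ℕ}
    (h : (∑ j : Fin (m i + 1), p ⟨i, j⟩) = 1) :
    ∃ j₀ : Fin (m i + 1), p ⟨i, j₀⟩ = 1 ∧ ∀ j, j ≠ j₀ → p ⟨i, j⟩ = 0 := by
  classical
  have hex : ∃ j₀ : Fin (m i + 1), p ⟨i, j₀⟩ ≠ 0 := by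
    by_contra hc
    push_neg at hc
    simp [hc] at h
  obtain ⟨j₀, hj₀⟩ := hex
  have h1 : p ⟨i, j₀⟩ = 1 := by
    have hle : p ⟨i, j₀⟩ ≤ ∑ j : Fin (m i + 1), p ⟨i, j⟩ :=
      Finset.single_le_sum (f := fun j : Fin (m i + 1) => p ⟨i, j⟩) (fun _ _ => Nat.zero_le _) (Finset.mem_univ _)
    omega
  refine ⟨j₀, h1, fun j hj => ?_⟩
  by_contra hc
  have : 2 ≤ ∑ j : Fin (m i + 1), p ⟨i, j⟩ := by
    have hsum := Finset.add_sum_erase Finset.univ (fun j => p ⟨i, j⟩) (Finset.mem_univ j₀)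
    have hle : p ⟨i, j⟩ ≤ ∑ x ∈ Finset.univ.erase j₀, p ⟨i, x⟩ :=
      Finset.single_le_sum (f := fun j : Fin (m i + 1) => p ⟨i, j⟩) (fun _ _ => Nat.zero_le _) (Finset.mem_erase.mpr ⟨hj, Finset.mem_univ _⟩)
    omega
  omega


lemma eval_pderiv_congr {i : Fin n} {F : MvPolynomial ((Σ i : Fin n, Fin (m i + 1))) ℂ}
    (hF : ∀ p ∈ F.support, (∑ j : Fin (m i + 1), p ⟨i, j⟩) = 1)
    (j : Fin (m i + 1)) {y y' : (Σ i : Fin n, Fin (m i + 1)) → ℂ}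
    (hy : ∀ v : (Σ i : Fin n, Fin (m i + 1)), v.1 ≠ i → y v = y' v) :
    eval y (pderiv ⟨i, j⟩ F) = eval y' (pderiv ⟨i, j⟩ F) := by
  classical
  conv_lhs => rw [F.as_sum]
  conv_rhs => rw [F.as_sum]
  simp only [map_sum]
  refine Finset.sum_congr rfl fun p hp => ?_
  rw [pderiv_monomial, eval_monomial, eval_monomial]
  obtain ⟨j₀, hj₀, hrest⟩ := exists_unique_index (hF p hp)
  by_cases hjj : p ⟨i, j⟩ = 0
  · simp [hjj]
  · have hj : j = j₀ := by
      by_contra hne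
      exact hjj (hrest j hne)
    subst hj
    have hq : ∀ j' : Fin (m i + 1), ((p - Finsupp.single (⟨i, j⟩ : Σ i : Fin n, Fin (m i + 1)) 1 : (Σ i : Fin n, Fin (m i + 1)) →₀ ℕ)) ⟨i, j'⟩ = 0 := by
      intro j'
      rw [Finsupp.tsub_apply, Finsupp.single_apply]
      by_cases hj' : j' = j
      · subst hj'; simp [hj₀]
      · have : (⟨i, j⟩ : Σ i : Fin n, Fin (m i + 1)) ≠ ⟨i, j'⟩ := by
          simp [Sigma.ext_iff]; intro h; exact absurd h.symm hj'
        simp [this, hrest j' hj']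
    congr 1
    refine Finsupp.prod_congr fun v hv => ?_
    have hvi : v.1 ≠ i := by
      intro hc
      rcases v with ⟨vi, vj⟩
      dsimp at hc
      subst hc
      exact (Finsupp.mem_support_iff.mp hv) (hq vj)
    rw [hy v hvi]

lemma euler_block {i : Fin n} {F : MvPolynomial ((Σ i : Fin n, Fin (m i + 1))) ℂ}
    (hF : ∀ p ∈ F.support, (∑ j : Fin (m i + 1), p ⟨i, j⟩) = 1)
    (y : (Σ i : Fin n, Fin (m i + 1)) → ℂ) :
    eval y F = ∑ j : Fin (m i + 1), y ⟨i, j⟩ * eval y (pderiv ⟨i, j⟩ F) := by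
  classical
  conv_lhs => rw [F.as_sum]
  conv_rhs => rw [F.as_sum]
  simp only [map_sum, Finset.mul_sum]
  rw [Finset.sum_comm]
  refine Finset.sum_congr rfl fun p hp => ?_
  obtain ⟨j₀, hj₀, hrest⟩ := exists_unique_index (hF p hp)
  rw [Finset.sum_eq_single j₀]
  · rw [pderiv_monomial, eval_monomial, eval_monomial, hj₀]
    have hle : Finsupp.single (⟨i, j₀⟩ : Σ i : Fin n, Fin (m i + 1)) 1 ≤ p :=
      Finsupp.single_le_iff.mpr (by omega)
    have hsplit : (p - Finsupp.single ⟨i, j₀⟩ 1) + Finsupp.single ⟨i, j₀⟩ 1 = p :=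
      tsub_add_cancel_of_le hle
    have hprod : (p.prod fun v e => y v ^ e)
        = ((p - Finsupp.single (⟨i, j₀⟩ : Σ i : Fin n, Fin (m i + 1)) 1).prod
            fun v e => y v ^ e) * y ⟨i, j₀⟩ := by
      conv_lhs => rw [← hsplit]
      rw [Finsupp.prod_add_index' (fun a => pow_zero (y a)) (fun a b₁ b₂ => pow_add (y a) b₁ b₂)]
      congr 1
      exact (Finsupp.prod_single_index (h := fun v e => y v ^ e) (pow_zero _)).trans (pow_one _)
    rw [hprod]
    ring
  · intro j _ hj
    rw [pderiv_monomial, eval_monomial, hrest j hj]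
    simp
  · intro h
    exact absurd (Finset.mem_univ j₀) h

end MultiProjAux

/-- for an irreducible divisor `D = {F = 0}` of multidegree `(1,...,1)` and
each projection `π i`, over every point `z ∉ W i` the fiber of `π i` restricted to `D` is a
hyperplane `ℙ^(m i - 1)` inside the fiber `ℙ^(m i)` (so `π i |_D` is a `ℙ^(m i - 1)`-bundle
over the complement of `W i`); in particular `D` is smooth at every point not lying over
`W i`. -/
theorem bundle_structure_and_smoothness
    (n : ℕ) (hn : 2 ≤ n) (m : Fin n → ℕ) (hm : ∀ i, 1 ≤ m i)
    (F : MvPolynomial (MultiProj.Idx m) ℂ)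
    (hirr : Irreducible F)
    (hdeg : MultiProj.IsMultiHomog m F (fun _ => 1)) :
    ∀ i : Fin n,
      (∀ z, z ∉ MultiProj.Wset m F i →
        ∃ φ : (Fin (m i + 1) → ℂ) →ₗ[ℂ] ℂ, φ ≠ 0 ∧
          ∀ x : MultiProj.Pt m, MultiProj.projAway m i x = z →
            (x ∈ MultiProj.zeroLocus m F ↔ φ ((x i).rep) = 0)) ∧
      (∀ x ∈ MultiProj.zeroLocus m F,
        MultiProj.projAway m i x ∉ MultiProj.Wset m F i → MultiProj.IsSmoothPt m F x) := by
  open MultiProjAux in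

  intro i
  have hF : ∀ p ∈ F.support, (∑ j : Fin (m i + 1), p ⟨i, j⟩) = 1 := fun p hp => hdeg p hp i
  -- the "reference point" over `z` and the fiberwise coefficients
  set yz : (∀ j : {j : Fin n // j ≠ i}, ℙ ℂ (Fin (m j.1 + 1) → ℂ)) → MultiProj.Idx m → ℂ :=
    fun z v => if h : v.1 = i then 0 else (z ⟨v.1, h⟩).rep v.2 with hyz
  set c : (∀ j : {j : Fin n // j ≠ i}, ℙ ℂ (Fin (m j.1 + 1) → ℂ)) → Fin (m i + 1) → ℂ :=
    fun z j => eval (yz z) (pderiv ⟨i, j⟩ F) with hc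
  have key : ∀ z, ∀ x : MultiProj.Pt m, MultiProj.projAway m i x = z →
      eval (fun v : MultiProj.Idx m => (x v.1).rep v.2) F
        = ∑ j : Fin (m i + 1), (x i).rep j * c z j := by
    intro z x hx
    rw [euler_block hF]
    refine Finset.sum_congr rfl fun j _ => ?_
    congr 1
    refine eval_pderiv_congr hF j fun v hv => ?_
    have hxv : x v.1 = z ⟨v.1, hv⟩ := congrFun hx ⟨v.1, hv⟩
    rw [hyz]
    simp only [dif_neg hv]
    rw [hxv]
  have keyW : ∀ z, z ∉ MultiProj.Wset m F i → ∃ j, c z j ≠ 0 := by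
    intro z hz
    have : ¬ ∀ x : MultiProj.Pt m, MultiProj.projAway m i x = z →
        x ∈ MultiProj.zeroLocus m F := hz
    push_neg at this
    obtain ⟨x₀, hx₀p, hx₀⟩ := this
    by_contra hcz
    push_neg at hcz
    apply hx₀
    show eval (fun v : MultiProj.Idx m => (x₀ v.1).rep v.2) F = 0
    rw [key z x₀ hx₀p]
    simp [hcz]
  constructor
  · intro z hz
    refine ⟨{ toFun := fun u => ∑ j : Fin (m i + 1), u j * c z j,
              map_add' := by
                intro u v; simp [add_mul, Finset.sum_add_distrib]
              map_smul' := by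
                intro a u; simp [Finset.mul_sum, mul_assoc] }, ?_, ?_⟩
    · intro h0
      obtain ⟨j, hj⟩ := keyW z hz
      apply hj
      have := congrArg (fun ψ : (Fin (m i + 1) → ℂ) →ₗ[ℂ] ℂ => ψ (Pi.single j 1)) h0
      simpa [Pi.single_apply, Finset.sum_ite_eq'] using this
    · intro x hx
      have hmem : x ∈ MultiProj.zeroLocus m F ↔
          eval (fun v : MultiProj.Idx m => (x v.1).rep v.2) F = 0 := Iff.rfl
      rw [hmem, key z x hx]
      exact Iff.rfl
  · intro x hx hW
    obtain ⟨j, hj⟩ := keyW _ hW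
    refine ⟨⟨i, j⟩, ?_⟩
    have : eval (fun v : MultiProj.Idx m => (x v.1).rep v.2) (pderiv ⟨i, j⟩ F)
        = c (MultiProj.projAway m i x) j := by
      refine eval_pderiv_congr hF j fun v hv => ?_
      rw [hyz]
      simp only [dif_neg hv]
      rfl
    rw [this]
    exact hj
end
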